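/- arXiv:2112.05453 — 3 statements merged into one kernel-verified Lean document; each statement's English description precedes it below -/
import Mathlib

section
/- Let A ∈ su(n,1). Then Q·A·Q = −A if and only if there exist a, b ∈ ℝ and v ∈ ℂ^{n−1} such that A has the block form [[0, v, −v], [vᴴ, a, ib], [−vᴴ, −ib, −a]]; and Q·A·Q = A if and only if there exist a skew-Hermitian B ∈ M_{n−1}(ℂ), v ∈ ℂ^{n−1} and a, b ∈ ℝ with 2i(a+b) + trace(B) = 0 such that A has the block form [[B, v, v], [−vᴴ, i(a+b), i(a−b)], [−vᴴ, i(a−b), i(a+b)]] (blocks of sizes n−1, 1, 1). -/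
/-!
Split the indices into blocks of sizes `n - 1` and `2`, so that `Q = diag(1, S)` with `S` the
swap matrix. For `A = [[B, C], [D, E]]` the involution is `QAQ = [[B, CS], [SD, SES]]`, and
`A ∈ su(n,1)` says `Bᴴ = -B`, `C = -DᴴS` and `EᴴS + SE = 0`. Hence `QAQ = ±A` can be solved
block by block: it kills `B` (sign `-`), makes the two columns of `C` agree up to the sign,
and pairs the entries of `E` crosswise, after which the relation `EᴴS + SE = 0` forces the
diagonal of `E` to be real (sign `-`) or imaginary (sign `+`) and its off-diagonal imaginary.
-/

open Matrix Complex

/-- The second Hermitian form matrix `Q = diag(Id_{n-1}, [[0,1],[1,0]])` on `ℂ^{n+1}`,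
with the index set split into blocks of sizes `n-1, 1, 1`. -/
noncomputable def Qmat (n : ℕ) : Matrix (Fin (n-1) ⊕ Fin 2) (Fin (n-1) ⊕ Fin 2) ℂ :=
  Matrix.fromBlocks 1 0 0 !![0, 1; 1, 0]

lemma Complex.eq_I_mul_im_of_star_add_self {z : ℂ} (h : star z + z = 0) : z = I * z.im := by
  have hre : z.re = 0 := by simpa [← two_mul] using congrArg re h
  apply Complex.ext <;> simp [hre]

namespace Matrix

variable {α m k : Type*}

section Blocks

variable [Fintype m] [Fintype k]
variable (B : Matrix m m α) (C : Matrix m k α) (D : Matrix k m α) (E : Matrix k k α)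

lemma fromBlocks_one_mul_mul_fromBlocks_one [Ring α] [DecidableEq m] (P : Matrix k k α) :
    fromBlocks 1 0 0 P * fromBlocks B C D E * fromBlocks 1 0 0 P =
      fromBlocks B (C * P) (P * D) (P * E * P) := by
  simp [fromBlocks_multiply]

lemma conjTranspose_mul_fromBlocks_one_add [Ring α] [StarRing α] [DecidableEq m]
    (P : Matrix k k α) :
    (fromBlocks B C D E)ᴴ * fromBlocks 1 0 0 P + fromBlocks 1 0 0 P * fromBlocks B C D E =
      fromBlocks (Bᴴ + B) (Dᴴ * P + C) (Cᴴ + P * D) (Eᴴ * P + P * E) := by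
  simp [fromBlocks_conjTranspose, fromBlocks_multiply, fromBlocks_add]

lemma trace_fromBlocks [AddCommMonoid α] : (fromBlocks B C D E).trace = B.trace + E.trace := by
  simp [trace, Fintype.sum_sum_type]

end Blocks

lemma conjTranspose_fin_two [Star α] (a b c d : α) :
    !![a, b; c, d]ᴴ = !![star a, star c; star b, star d] := by
  ext i j; fin_cases i <;> fin_cases j <;> rfl

def swapFinTwo (α : Type*) [Zero α] [One α] : Matrix (Fin 2) (Fin 2) α := !![0, 1; 1, 0]

section SwapFinTwo

variable [Ring α]

lemma swapFinTwo_mul_mul_swapFinTwo (a b c d : α) :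
    swapFinTwo α * !![a, b; c, d] * swapFinTwo α = !![d, c; b, a] := by
  simp [swapFinTwo]

lemma conjTranspose_mul_swapFinTwo_add_eq_zero_iff [StarRing α] (a b c d : α) :
    !![a, b; c, d]ᴴ * swapFinTwo α + swapFinTwo α * !![a, b; c, d] = 0 ↔
      star c + c = 0 ∧ star a + d = 0 ∧ star d + a = 0 ∧ star b + b = 0 := by
  simp [swapFinTwo, conjTranspose_fin_two, ← Matrix.ext_iff, Fin.forall_fin_two, and_assoc]

lemma mul_swapFinTwo (C : Matrix m (Fin 2) α) :
    C * swapFinTwo α = of fun i => ![C i 1, C i 0] := by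
  ext i j; fin_cases j <;> simp [swapFinTwo, mul_apply, Fin.sum_univ_two]

lemma swapFinTwo_mul (D : Matrix (Fin 2) m α) : swapFinTwo α * D = of ![D 1, D 0] := by
  ext i j; fin_cases i <;> simp [swapFinTwo, mul_apply, Fin.sum_univ_two]

variable [StarRing α] {C : Matrix m (Fin 2) α} {D : Matrix (Fin 2) m α}

lemma eq_neg_star_of_conjTranspose_mul_swapFinTwo_add_eq_zero
    (h : Dᴴ * swapFinTwo α + C = 0) :
    (∀ i, D 0 i = -star (C i 1)) ∧ ∀ i, D 1 i = -star (C i 0) := by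
  simp only [mul_swapFinTwo, ← Matrix.ext_iff, Fin.forall_fin_two, add_apply, of_apply,
    cons_val_zero, cons_val_one, conjTranspose_apply, zero_apply, forall_and] at h
  refine ⟨fun i => ?_, fun i => ?_⟩
  · rw [← star_star (D 0 i), eq_neg_of_add_eq_zero_left (h.2 i), star_neg]
  · rw [← star_star (D 1 i), eq_neg_of_add_eq_zero_left (h.1 i), star_neg]

lemma mul_swapFinTwo_eq_neg_and_iff (h : Dᴴ * swapFinTwo α + C = 0) :
    C * swapFinTwo α = -C ∧ swapFinTwo α * D = -D ↔ ∃ v : m → α,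
      C = of (fun i j => ![v i, -v i] j) ∧ D = of fun j i => ![star (v i), -star (v i)] j := by
  obtain ⟨hD₀, hD₁⟩ := eq_neg_star_of_conjTranspose_mul_swapFinTwo_add_eq_zero h
  simp only [← Matrix.ext_iff, Fin.forall_fin_two, swapFinTwo_mul, mul_swapFinTwo,
    neg_apply, of_apply, cons_val_zero, cons_val_one, hD₀, hD₁, forall_and]
  constructor
  · rintro ⟨⟨hC, -⟩, -⟩
    exact ⟨fun i => C i 0, ⟨fun _ => rfl, hC⟩, fun i => by simp [hC], fun _ => rfl⟩
  · rintro ⟨v, ⟨hC₀, hC₁⟩, -⟩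
    simp [hC₀, hC₁]

lemma mul_swapFinTwo_eq_self_and_iff (h : Dᴴ * swapFinTwo α + C = 0) :
    C * swapFinTwo α = C ∧ swapFinTwo α * D = D ↔ ∃ v : m → α,
      C = of (fun i j => ![v i, v i] j) ∧ D = of fun j i => ![-star (v i), -star (v i)] j := by
  obtain ⟨hD₀, hD₁⟩ := eq_neg_star_of_conjTranspose_mul_swapFinTwo_add_eq_zero h
  simp only [← Matrix.ext_iff, Fin.forall_fin_two, swapFinTwo_mul, mul_swapFinTwo,
    of_apply, cons_val_zero, cons_val_one, hD₀, hD₁, forall_and]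
  constructor
  · rintro ⟨⟨hC, -⟩, -⟩
    exact ⟨fun i => C i 0, ⟨fun _ => rfl, hC⟩, fun i => by simp [hC], fun _ => rfl⟩
  · rintro ⟨v, ⟨hC₀, hC₁⟩, -⟩
    simp [hC₀, hC₁]

end SwapFinTwo

section FinTwo

variable {p q r s : ℂ}

lemma swapFinTwo_mul_mul_swapFinTwo_eq_neg_iff
    (h : !![p, q; r, s]ᴴ * swapFinTwo ℂ + swapFinTwo ℂ * !![p, q; r, s] = 0) :
    swapFinTwo ℂ * !![p, q; r, s] * swapFinTwo ℂ = -!![p, q; r, s] ↔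
      ∃ a b : ℝ, !![p, q; r, s] = !![(a : ℂ), I * b; -(I * b), -(a : ℂ)] := by
  rw [swapFinTwo_mul_mul_swapFinTwo]
  rw [conjTranspose_mul_swapFinTwo_add_eq_zero_iff] at h
  simp only [neg_of, neg_cons, neg_empty, EmbeddingLike.apply_eq_iff_eq, vecCons_inj, and_true]
  constructor
  · rintro ⟨⟨rfl, rfl⟩, -⟩
    have hp : p = p.re := (conj_eq_iff_re.mp (add_neg_eq_zero.mp h.2.1)).symm
    have hq : q = I * q.im := Complex.eq_I_mul_im_of_star_add_self h.2.2.2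
    exact ⟨p.re, q.im, ⟨hp, hq⟩, by rw [← hq], by rw [← hp]⟩
  · rintro ⟨a, b, ⟨rfl, rfl⟩, rfl, rfl⟩
    simp

lemma swapFinTwo_mul_mul_swapFinTwo_eq_self_iff
    (h : !![p, q; r, s]ᴴ * swapFinTwo ℂ + swapFinTwo ℂ * !![p, q; r, s] = 0) :
    swapFinTwo ℂ * !![p, q; r, s] * swapFinTwo ℂ = !![p, q; r, s] ↔
      ∃ a b : ℝ, !![p, q; r, s] =
        !![I * ((a : ℂ) + (b : ℂ)), I * ((a : ℂ) - (b : ℂ));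
           I * ((a : ℂ) - (b : ℂ)), I * ((a : ℂ) + (b : ℂ))] := by
  rw [swapFinTwo_mul_mul_swapFinTwo]
  rw [conjTranspose_mul_swapFinTwo_add_eq_zero_iff] at h
  simp only [EmbeddingLike.apply_eq_iff_eq, vecCons_inj, and_true]
  constructor
  · rintro ⟨⟨hs, hr⟩, -⟩
    subst s r
    have hp : p = I * p.im := Complex.eq_I_mul_im_of_star_add_self h.2.1
    have hq : q = I * q.im := Complex.eq_I_mul_im_of_star_add_self h.1
    refine ⟨(p.im + q.im) / 2, (p.im - q.im) / 2, ?_⟩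
    push_cast
    exact ⟨⟨by linear_combination hp, by linear_combination hq⟩,
      by linear_combination hq, by linear_combination hp⟩
  · rintro ⟨a, b, ⟨rfl, rfl⟩, rfl, rfl⟩
    simp

end FinTwo

end Matrix

lemma Qmat_eq_fromBlocks (n : ℕ) : Qmat n = fromBlocks 1 0 0 (swapFinTwo ℂ) := rfl

theorem stmt2_general (n : ℕ) (A : Matrix (Fin (n-1) ⊕ Fin 2) (Fin (n-1) ⊕ Fin 2) ℂ)
    (hA : Aᴴ * Qmat n + Qmat n * A = 0) (htr : A.trace = 0) :
    ((Qmat n * A * Qmat n = -A ↔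
      ∃ (a b : ℝ) (v : Fin (n-1) → ℂ),
        A = Matrix.fromBlocks 0
              (Matrix.of fun i j => ![v i, -v i] j)
              (Matrix.of fun j i => ![star (v i), -star (v i)] j)
              !![(a : ℂ), Complex.I * (b : ℂ); -(Complex.I * (b : ℂ)), -(a : ℂ)]) ∧
     (Qmat n * A * Qmat n = A ↔
      ∃ (B : Matrix (Fin (n-1)) (Fin (n-1)) ℂ) (v : Fin (n-1) → ℂ) (a b : ℝ),
        Bᴴ = -B ∧ 2 * Complex.I * ((a : ℂ) + (b : ℂ)) + B.trace = 0 ∧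
        A = Matrix.fromBlocks B
              (Matrix.of fun i j => ![v i, v i] j)
              (Matrix.of fun j i => ![-star (v i), -star (v i)] j)
              !![Complex.I * ((a : ℂ) + (b : ℂ)), Complex.I * ((a : ℂ) - (b : ℂ));
                 Complex.I * ((a : ℂ) - (b : ℂ)), Complex.I * ((a : ℂ) + (b : ℂ))])) := by
  obtain ⟨B, C, D, E, rfl⟩ : ∃ B C D E, A = fromBlocks B C D E :=
    ⟨_, _, _, _, (fromBlocks_toBlocks A).symm⟩
  obtain ⟨p, q, r, s, rfl⟩ : ∃ p q r s, E = !![p, q; r, s] := ⟨_, _, _, _, eta_fin_two E⟩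
  rw [Qmat_eq_fromBlocks, conjTranspose_mul_fromBlocks_one_add, ← fromBlocks_zero,
    fromBlocks_inj] at hA
  obtain ⟨hB, hCD, -, hE⟩ := hA
  rw [trace_fromBlocks] at htr
  simp only [Qmat_eq_fromBlocks, fromBlocks_one_mul_mul_fromBlocks_one, fromBlocks_neg,
    fromBlocks_inj]
  constructor
  · constructor
    · rintro ⟨hB', hC, hD, hE'⟩
      obtain ⟨v, rfl, rfl⟩ := (mul_swapFinTwo_eq_neg_and_iff hCD).mp ⟨hC, hD⟩
      obtain ⟨a, b, hab⟩ := (swapFinTwo_mul_mul_swapFinTwo_eq_neg_iff hE).mp hE'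
      exact ⟨a, b, v, by ext i j; exact self_eq_neg.mp (congrFun₂ hB' i j), rfl, rfl, hab⟩
    · rintro ⟨a, b, v, rfl, hC, hD, hab⟩
      obtain ⟨hC', hD'⟩ := (mul_swapFinTwo_eq_neg_and_iff hCD).mpr ⟨v, hC, hD⟩
      exact ⟨neg_zero.symm, hC', hD',
        (swapFinTwo_mul_mul_swapFinTwo_eq_neg_iff hE).mpr ⟨a, b, hab⟩⟩
  · constructor
    · rintro ⟨-, hC, hD, hE'⟩
      obtain ⟨v, rfl, rfl⟩ := (mul_swapFinTwo_eq_self_and_iff hCD).mp ⟨hC, hD⟩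
      obtain ⟨a, b, hab⟩ := (swapFinTwo_mul_mul_swapFinTwo_eq_self_iff hE).mp hE'
      refine ⟨B, v, a, b, eq_neg_of_add_eq_zero_left hB, ?_, rfl, rfl, rfl, hab⟩
      rw [hab, trace_fin_two_of] at htr
      linear_combination htr
    · rintro ⟨B', v, a, b, -, -, rfl, hC, hD, hab⟩
      obtain ⟨hC', hD'⟩ := (mul_swapFinTwo_eq_self_and_iff hCD).mpr ⟨v, hC, hD⟩
      exact ⟨trivial, hC', hD',
        (swapFinTwo_mul_mul_swapFinTwo_eq_self_iff hE).mpr ⟨a, b, hab⟩⟩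

/-- For `A ∈ su(n,1)`: the `(−1)`-eigenspace of the Cartan involution `A ↦ QAQ`
consists of the matrices `[[0, v, −v], [vᴴ, a, ib], [−vᴴ, −ib, −a]]`, and the
`(+1)`-eigenspace consists of the matrices
`[[B, v, v], [−vᴴ, i(a+b), i(a−b)], [−vᴴ, i(a−b), i(a+b)]]`
with `B` skew-Hermitian and `2i(a+b) + tr B = 0`. -/
theorem stmt2 (n : ℕ) (hn : 2 ≤ n) (A : Matrix (Fin (n-1) ⊕ Fin 2) (Fin (n-1) ⊕ Fin 2) ℂ)
    (hA : Aᴴ * Qmat n + Qmat n * A = 0) (htr : A.trace = 0) :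
    ((Qmat n * A * Qmat n = -A ↔
      ∃ (a b : ℝ) (v : Fin (n-1) → ℂ),
        A = Matrix.fromBlocks 0
              (Matrix.of fun i j => ![v i, -v i] j)
              (Matrix.of fun j i => ![star (v i), -star (v i)] j)
              !![(a : ℂ), Complex.I * (b : ℂ); -(Complex.I * (b : ℂ)), -(a : ℂ)]) ∧
     (Qmat n * A * Qmat n = A ↔
      ∃ (B : Matrix (Fin (n-1)) (Fin (n-1)) ℂ) (v : Fin (n-1) → ℂ) (a b : ℝ),
        Bᴴ = -B ∧ 2 * Complex.I * ((a : ℂ) + (b : ℂ)) + B.trace = 0 ∧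
        A = Matrix.fromBlocks B
              (Matrix.of fun i j => ![v i, v i] j)
              (Matrix.of fun j i => ![-star (v i), -star (v i)] j)
              !![Complex.I * ((a : ℂ) + (b : ℂ)), Complex.I * ((a : ℂ) - (b : ℂ));
                 Complex.I * ((a : ℂ) - (b : ℂ)), Complex.I * ((a : ℂ) + (b : ℂ))])) :=
  stmt2_general n A hA htr
end

section
/- For every linear form φ ∈ V*, the trilinear form T(B,C,D) = φ(B)·⟨JC, D⟩ satisfies the identity T = S²_τ − S⁴_τ, where τ = (1/4)·(φ ∘ J); in particular T belongs to the subspace K₂(V) + K₄(V) of K(V) (this is the key step of Corollary 6.4, showing E₂ is of type K₂ + K₃ + K₄). -/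
open scoped RealInnerProductSpace

/-- The `K₂(V)`-tensor with parameter `θ`. -/
noncomputable def S2 {V : Type*} [NormedAddCommGroup V] [InnerProductSpace ℝ V]
    (θ : V →ₗ[ℝ] ℝ) (J : V →ₗ[ℝ] V) (X Y Z : V) : ℝ :=
  θ Z * ⟪X, Y⟫ - θ Y * ⟪X, Z⟫ + θ (J Z) * ⟪X, J Y⟫ - θ (J Y) * ⟪X, J Z⟫
    - 2 * θ (J X) * ⟪J Y, Z⟫

/-- The `K₄(V)`-tensor with parameter `θ`. -/
noncomputable def S4 {V : Type*} [NormedAddCommGroup V] [InnerProductSpace ℝ V]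
    (θ : V →ₗ[ℝ] ℝ) (J : V →ₗ[ℝ] V) (X Y Z : V) : ℝ :=
  θ Z * ⟪X, Y⟫ - θ Y * ⟪X, Z⟫ + θ (J Z) * ⟪X, J Y⟫ - θ (J Y) * ⟪X, J Z⟫
    + 2 * θ (J X) * ⟪J Y, Z⟫

theorem S2_sub_S4 {V : Type*} [NormedAddCommGroup V] [InnerProductSpace ℝ V]
    (θ : V →ₗ[ℝ] ℝ) (J : V →ₗ[ℝ] V) (X Y Z : V) :
    S2 θ J X Y Z - S4 θ J X Y Z = -4 * θ (J X) * ⟪J Y, Z⟫ := by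
  unfold S2 S4
  ring

theorem stmt18_general {V : Type*} [NormedAddCommGroup V] [InnerProductSpace ℝ V]
    (J : V →ₗ[ℝ] V) (hJ2 : ∀ x, J (J x) = -x)
    (φ : V →ₗ[ℝ] ℝ) :
    ∀ B C D : V,
      φ B * ⟪J C, D⟫
        = S2 ((1/4 : ℝ) • (φ ∘ₗ J)) J B C D - S4 ((1/4 : ℝ) • (φ ∘ₗ J)) J B C D := by
  intro B C D
  rw [S2_sub_S4, LinearMap.smul_apply, LinearMap.comp_apply, hJ2, map_neg, smul_eq_mul]
  ring

/-- The tensor `T(B,C,D) = φ(B)⟨JC, D⟩` equals `S²_τ − S⁴_τ` with `τ = (1/4)(φ ∘ J)`;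
in particular `T ∈ K₂(V) + K₄(V)` (key step of Corollary 6.4). -/
theorem stmt18 {V : Type*} [NormedAddCommGroup V] [InnerProductSpace ℝ V]
    (J : V →ₗ[ℝ] V) (hJ2 : ∀ x, J (J x) = -x)
    (hJiso : ∀ x y : V, ⟪J x, J y⟫ = ⟪x, y⟫)
    (φ : V →ₗ[ℝ] ℝ) :
    ∀ B C D : V,
      φ B * ⟪J C, D⟫
        = S2 ((1/4 : ℝ) • (φ ∘ₗ J)) J B C D - S4 ((1/4 : ℝ) • (φ ∘ₗ J)) J B C D :=
  stmt18_general J hJ2 φ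
end

section
/- Equip K(V) with the inner product ⟨S, S'⟩ = Σ_{i,j,k=1}^{2n} S(e_i, e_j, e_k)·S'(e_i, e_j, e_k) for an orthonormal basis {e₁,…,e_{2n}} of V. Then a tensor S ∈ K(V) is orthogonal to the kernel of c₁₂ (i.e. ⟨S, T⟩ = 0 for every T ∈ K(V) with c₁₂(T) = 0) if and only if there exists σ ∈ V* such that S(B,C,D) = ⟨B,C⟩σ(D) − ⟨B,D⟩σ(C) + ⟨B,JC⟩σ(JD) − ⟨B,JD⟩σ(JC) for all B, C, D ∈ V. -/
/-!
Write `Q_σ(B,C,D) = ⟨B,C⟩σ(D) − ⟨B,D⟩σ(C) + ⟨B,JC⟩σ(JD) − ⟨B,JD⟩σ(JC)`. Pairing `Q_σ` with a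
tensor `T` contracts `T` in its first slot against one of the others, either directly or through
`J`; for `T ∈ K(V)` with `c₁₂(T) = 0` all these contractions vanish, so `Q_σ ⊥ ker c₁₂`.
Conversely `c₁₂(Q_σ) = 2n σ`, so `T = S − Q_σ` with `σ = c₁₂(S) / 2n` lies in `ker c₁₂`; if
`S ⊥ ker c₁₂` then `⟨T,T⟩ = ⟨S,T⟩ − ⟨Q_σ,T⟩ = 0`, hence `S = Q_σ`.
-/

open scoped RealInnerProductSpace

/-- A trilinear form on `V` belongs to `K(V)` if it is skew-symmetric in the last two
slots and invariant under `J` in the last two slots. -/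
def memK {V : Type*} [NormedAddCommGroup V] [InnerProductSpace ℝ V]
    (J : V →ₗ[ℝ] V) (S : V →ₗ[ℝ] V →ₗ[ℝ] V →ₗ[ℝ] ℝ) : Prop :=
  ∀ X Y Z : V, S X Y Z = -S X Z Y ∧ S X (J Y) (J Z) = S X Y Z

section

variable {V : Type*} [NormedAddCommGroup V] [InnerProductSpace ℝ V]
  {ι : Type*} [Fintype ι] (e : OrthonormalBasis ι ℝ V)

theorem OrthonormalBasis.sum_inner_smul_apply {M : Type*} [AddCommMonoid M] [Module ℝ M]
    (f : V →ₗ[ℝ] M) (x : V) : ∑ i, ⟪e i, x⟫ • f (e i) = f x := by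
  simp only [← map_smul, ← map_sum, e.sum_repr']

theorem OrthonormalBasis.sum_inner_mul_apply₃ (T : V →ₗ[ℝ] V →ₗ[ℝ] V →ₗ[ℝ] ℝ) (x y z : V) :
    ∑ i, ⟪e i, x⟫ * T (e i) y z = T x y z := by
  simpa using congr($(e.sum_inner_smul_apply T x) y z)

theorem OrthonormalBasis.sum_apply_skew {M : Type*} [AddCommGroup M] [Module ℝ M]
    {A : V →ₗ[ℝ] V} (hA : ∀ x y, ⟪A x, y⟫ = -⟪x, A y⟫) (B : V →ₗ[ℝ] V →ₗ[ℝ] M) :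
    ∑ j, B (A (e j)) (e j) = -∑ j, B (e j) (A (e j)) := by
  have h : ∀ j, B (A (e j)) (e j) = ∑ a, ⟪e a, A (e j)⟫ • B (e a) (e j) := fun j => by
    simpa using congr($(e.sum_inner_smul_apply B (A (e j))) (e j)).symm
  have h' : ∀ a, ∑ j, ⟪e a, A (e j)⟫ • B (e a) (e j) = -B (e a) (A (e a)) := fun a => by
    have hinner : ∀ j, ⟪e a, A (e j)⟫ = ⟪e j, -A (e a)⟫ := fun j => by
      rw [inner_neg_right, real_inner_comm _ (e j), hA, neg_neg]
    simp only [hinner, e.sum_inner_smul_apply, map_neg]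
  rw [Finset.sum_congr rfl fun j _ => h j, Finset.sum_comm, ← Finset.sum_neg_distrib]
  exact Finset.sum_congr rfl fun a _ => h' a

theorem inner_apply_left_eq_neg {J : V →ₗ[ℝ] V} (hJ2 : ∀ x, J (J x) = -x)
    (hJiso : ∀ x y : V, ⟪J x, J y⟫ = ⟪x, y⟫) (x y : V) : ⟪J x, y⟫ = -⟪x, J y⟫ := by
  rw [← hJiso x (J y), hJ2, inner_neg_right, neg_neg]

noncomputable def tensorInner (S T : V →ₗ[ℝ] V →ₗ[ℝ] V →ₗ[ℝ] ℝ) : ℝ :=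
  ∑ i, ∑ j, ∑ k, S (e i) (e j) (e k) * T (e i) (e j) (e k)

noncomputable def c₁₂ (T : V →ₗ[ℝ] V →ₗ[ℝ] V →ₗ[ℝ] ℝ) : V →ₗ[ℝ] ℝ :=
  ∑ i, T (e i) (e i)

@[simp]
theorem c₁₂_apply (T : V →ₗ[ℝ] V →ₗ[ℝ] V →ₗ[ℝ] ℝ) (Z : V) :
    c₁₂ e T Z = ∑ i, T (e i) (e i) Z :=
  LinearMap.sum_apply _ _ _

theorem c₁₂_add_smul (S T : V →ₗ[ℝ] V →ₗ[ℝ] V →ₗ[ℝ] ℝ) (c : ℝ) :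
    c₁₂ e (S + c • T) = c₁₂ e S + c • c₁₂ e T := by
  simp only [c₁₂, LinearMap.add_apply, LinearMap.smul_apply, Finset.sum_add_distrib,
    Finset.smul_sum]

noncomputable def tensorOfForm (J : V →ₗ[ℝ] V) (σ : V →ₗ[ℝ] ℝ) :
    V →ₗ[ℝ] V →ₗ[ℝ] V →ₗ[ℝ] ℝ :=
  LinearMap.mk₂ ℝ
    (fun B C => ⟪B, C⟫ • σ - σ C • innerₗ V B + ⟪B, J C⟫ • (σ ∘ₗ J)
      - σ (J C) • (innerₗ V B ∘ₗ J))
    (fun B B' C => by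
      ext
      simp only [inner_add_left, map_add, smul_add, LinearMap.sub_apply, LinearMap.add_apply,
        LinearMap.smul_apply, smul_eq_mul, innerₗ_apply_apply, LinearMap.coe_comp,
        Function.comp_apply]
      ring)
    (fun c B C => by
      ext
      simp only [real_inner_smul_left, map_smul, LinearMap.sub_apply, LinearMap.add_apply,
        LinearMap.smul_apply, smul_eq_mul, innerₗ_apply_apply, LinearMap.coe_comp,
        Function.comp_apply, LinearMap.coe_smul, Pi.smul_apply]
      ring)
    (fun B C C' => by
      ext
      simp only [inner_add_right, map_add, LinearMap.sub_apply, LinearMap.add_apply,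
        LinearMap.smul_apply, smul_eq_mul, innerₗ_apply_apply, LinearMap.coe_comp,
        Function.comp_apply]
      ring)
    (fun c B C => by
      ext
      simp only [real_inner_smul_right, map_smul, smul_eq_mul, LinearMap.sub_apply,
        LinearMap.add_apply, LinearMap.smul_apply, innerₗ_apply_apply, LinearMap.coe_comp,
        Function.comp_apply]
      ring)

@[simp]
theorem tensorOfForm_apply (J : V →ₗ[ℝ] V) (σ : V →ₗ[ℝ] ℝ) (B C D : V) :
    tensorOfForm J σ B C D
      = ⟪B, C⟫ * σ D - ⟪B, D⟫ * σ C + ⟪B, J C⟫ * σ (J D) - ⟪B, J D⟫ * σ (J C) := by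
  simp only [tensorOfForm, LinearMap.mk₂_apply, LinearMap.sub_apply, LinearMap.add_apply,
    LinearMap.smul_apply, smul_eq_mul, innerₗ_apply_apply, LinearMap.coe_comp, Function.comp_apply]
  ring

theorem memK.add {J : V →ₗ[ℝ] V} {S T : V →ₗ[ℝ] V →ₗ[ℝ] V →ₗ[ℝ] ℝ} (hS : memK J S)
    (hT : memK J T) : memK J (S + T) := fun X Y Z =>
  ⟨by simp only [LinearMap.add_apply, (hS X Y Z).1, (hT X Y Z).1]; ring,
    by simp only [LinearMap.add_apply, (hS X Y Z).2, (hT X Y Z).2]⟩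

theorem memK.smul {J : V →ₗ[ℝ] V} {T : V →ₗ[ℝ] V →ₗ[ℝ] V →ₗ[ℝ] ℝ} (hT : memK J T) (c : ℝ) :
    memK J (c • T) := fun X Y Z =>
  ⟨by simp only [LinearMap.smul_apply, (hT X Y Z).1, smul_neg],
    by simp only [LinearMap.smul_apply, (hT X Y Z).2]⟩

theorem tensorInner_add_left (S S' T : V →ₗ[ℝ] V →ₗ[ℝ] V →ₗ[ℝ] ℝ) :
    tensorInner e (S + S') T = tensorInner e S T + tensorInner e S' T := by
  simp only [tensorInner, LinearMap.add_apply, add_mul, Finset.sum_add_distrib]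

theorem tensorInner_smul_left (c : ℝ) (S T : V →ₗ[ℝ] V →ₗ[ℝ] V →ₗ[ℝ] ℝ) :
    tensorInner e (c • S) T = c * tensorInner e S T := by
  simp only [tensorInner, LinearMap.smul_apply, smul_eq_mul, mul_assoc, Finset.mul_sum]

theorem memK_tensorOfForm {J : V →ₗ[ℝ] V} (hJ2 : ∀ x, J (J x) = -x) (σ : V →ₗ[ℝ] ℝ) :
    memK J (tensorOfForm J σ) := fun X Y Z => by
  simp only [tensorOfForm_apply, hJ2, inner_neg_right, map_neg]
  constructor <;> ring

theorem c₁₂_tensorOfForm {J : V →ₗ[ℝ] V} (hJ2 : ∀ x, J (J x) = -x)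
    (hJskew : ∀ x y, ⟪J x, y⟫ = -⟪x, J y⟫) (σ : V →ₗ[ℝ] ℝ) :
    c₁₂ e (tensorOfForm J σ) = (Fintype.card ι : ℝ) • σ := by
  ext Z
  have hnorm : ∀ i, ⟪e i, e i⟫ = 1 := fun i =>
    inner_self_eq_one_of_norm_eq_one (e.orthonormal.1 i)
  have hJself : ∀ x, ⟪x, J x⟫ = 0 := fun x => by
    have := hJskew x x
    rw [real_inner_comm] at this
    linarith
  have hσ : ∑ i, ⟪e i, Z⟫ * σ (e i) = σ Z := e.sum_inner_smul_apply σ Z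
  have hσJ : ∑ i, ⟪e i, J Z⟫ * σ (J (e i)) = -σ Z := by
    simpa [hJ2] using e.sum_inner_smul_apply (σ ∘ₗ J) (J Z)
  simp only [c₁₂_apply, tensorOfForm_apply, hnorm, hJself, Finset.sum_sub_distrib,
    Finset.sum_add_distrib, hσ, hσJ]
  simp

theorem c₁₂_add_neg_tensorOfForm {J : V →ₗ[ℝ] V} (hJ2 : ∀ x, J (J x) = -x)
    (hJskew : ∀ x y, ⟪J x, y⟫ = -⟪x, J y⟫) (S : V →ₗ[ℝ] V →ₗ[ℝ] V →ₗ[ℝ] ℝ) :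
    c₁₂ e (S + (-1 : ℝ) • tensorOfForm J ((Fintype.card ι : ℝ)⁻¹ • c₁₂ e S)) = 0 := by
  rw [c₁₂_add_smul, c₁₂_tensorOfForm e hJ2 hJskew]
  rcases (Fintype.card ι).eq_zero_or_pos with hι | hι
  · have : IsEmpty ι := Fintype.card_eq_zero_iff.mp hι
    simp [c₁₂]
  · rw [smul_smul (Fintype.card ι : ℝ),
      mul_inv_cancel₀ (Nat.cast_ne_zero.mpr hι.ne' : (Fintype.card ι : ℝ) ≠ 0), one_smul]
    ext Z
    simp

/-- Skewness of `J` moves it from the first slot to the second, and `J`-invariance then moves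
it to the third, where the contraction `c₁₂` kills it. -/
theorem sum_apply_J_self_eq_zero {J : V →ₗ[ℝ] V} (hJ2 : ∀ x, J (J x) = -x)
    (hJskew : ∀ x y, ⟪J x, y⟫ = -⟪x, J y⟫) {T : V →ₗ[ℝ] V →ₗ[ℝ] V →ₗ[ℝ] ℝ} (hT : memK J T)
    (hT₀ : c₁₂ e T = 0) (Z : V) : ∑ i, T (J (e i)) (e i) Z = 0 := by
  have hinv : ∀ i, T (e i) (J (e i)) Z = -T (e i) (e i) (J Z) := fun i => by
    simpa [hJ2] using (hT (e i) (e i) (-J Z)).2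
  simpa [hinv, ← c₁₂_apply, hT₀] using congr($(e.sum_apply_skew hJskew T) Z)

theorem tensorInner_tensorOfForm_eq_zero {J : V →ₗ[ℝ] V} (hJ2 : ∀ x, J (J x) = -x)
    (hJskew : ∀ x y, ⟪J x, y⟫ = -⟪x, J y⟫) (σ : V →ₗ[ℝ] ℝ)
    {T : V →ₗ[ℝ] V →ₗ[ℝ] V →ₗ[ℝ] ℝ} (hT : memK J T) (hT₀ : c₁₂ e T = 0) :
    tensorInner e (tensorOfForm J σ) T = 0 := by
  have hJT₀ := sum_apply_J_self_eq_zero e hJ2 hJskew hT hT₀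
  have hslot : ∀ j k, ∑ i, tensorOfForm J σ (e i) (e j) (e k) * T (e i) (e j) (e k)
      = σ (e k) * T (e j) (e j) (e k) - σ (e j) * T (e k) (e j) (e k)
        + σ (J (e k)) * T (J (e j)) (e j) (e k) - σ (J (e j)) * T (J (e k)) (e j) (e k) :=
    fun j k => by
      have hinner : ∀ i, tensorOfForm J σ (e i) (e j) (e k) = ⟪e i, σ (e k) • e j
          - σ (e j) • e k + σ (J (e k)) • J (e j) - σ (J (e j)) • J (e k)⟫ := fun i => by
        simp only [tensorOfForm_apply, inner_add_right, inner_sub_right, real_inner_smul_right]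
        ring
      simp only [hinner, e.sum_inner_mul_apply₃, map_add, map_sub, map_smul,
        LinearMap.add_apply, LinearMap.sub_apply, LinearMap.smul_apply, smul_eq_mul]
  have h₁ : ∑ j, ∑ k, σ (e k) * T (e j) (e j) (e k) = 0 := by
    rw [Finset.sum_comm]
    simp [← Finset.mul_sum, ← c₁₂_apply, hT₀]
  have h₂ : ∑ j, ∑ k, σ (e j) * T (e k) (e j) (e k) = 0 := by
    simp only [fun j k => (hT (e k) (e j) (e k)).1, mul_neg, Finset.sum_neg_distrib,
      ← Finset.mul_sum, ← c₁₂_apply, hT₀, LinearMap.zero_apply, mul_zero, neg_zero,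
      Finset.sum_const_zero]
  have h₃ : ∑ j, ∑ k, σ (J (e k)) * T (J (e j)) (e j) (e k) = 0 := by
    rw [Finset.sum_comm]
    simp [← Finset.mul_sum, hJT₀]
  have h₄ : ∑ j, ∑ k, σ (J (e j)) * T (J (e k)) (e j) (e k) = 0 := by
    simp only [fun j k => (hT (J (e k)) (e j) (e k)).1, mul_neg, Finset.sum_neg_distrib,
      ← Finset.mul_sum, hJT₀, mul_zero, neg_zero, Finset.sum_const_zero]
  rw [tensorInner, Finset.sum_comm, Finset.sum_congr rfl fun j _ => Finset.sum_comm]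
  simp only [hslot, Finset.sum_add_distrib, Finset.sum_sub_distrib, h₁, h₂, h₃, h₄]
  norm_num

theorem eq_zero_of_tensorInner_self_eq_zero {T : V →ₗ[ℝ] V →ₗ[ℝ] V →ₗ[ℝ] ℝ}
    (h : tensorInner e T T = 0) : T = 0 := by
  have hsq : ∀ i j k, T (e i) (e j) (e k) * T (e i) (e j) (e k) = 0 := fun i j k => by
    have hnonneg : ∀ i j k, 0 ≤ T (e i) (e j) (e k) * T (e i) (e j) (e k) :=
      fun _ _ _ => mul_self_nonneg _
    have hi := congrFun ((Fintype.sum_eq_zero_iff_of_nonneg fun i => Finset.sum_nonneg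
      fun j _ => Finset.sum_nonneg fun k _ => hnonneg i j k).1 h) i
    have hij := congrFun ((Fintype.sum_eq_zero_iff_of_nonneg fun j => Finset.sum_nonneg
      fun k _ => hnonneg i j k).1 hi) j
    exact congrFun ((Fintype.sum_eq_zero_iff_of_nonneg (hnonneg i j)).1 hij) k
  exact e.toBasis.ext fun i => LinearMap.ext_basis e.toBasis e.toBasis fun j k => by
    simpa using mul_self_eq_zero.mp (hsq i j k)

end

/-- A tensor `S ∈ K(V)` is orthogonal (w.r.t. the inner product
`⟨S,S'⟩ = Σ_{i,j,k} S(eᵢ,eⱼ,e_k)S'(eᵢ,eⱼ,e_k)`) to the kernel of the contraction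
`c₁₂` iff `S(B,C,D) = ⟨B,C⟩σ(D) − ⟨B,D⟩σ(C) + ⟨B,JC⟩σ(JD) − ⟨B,JD⟩σ(JC)` for some
`σ ∈ V*`. -/
theorem stmt19 {V : Type*} [NormedAddCommGroup V] [InnerProductSpace ℝ V]
    {n : ℕ} (J : V →ₗ[ℝ] V) (hJ2 : ∀ x, J (J x) = -x)
    (hJiso : ∀ x y : V, ⟪J x, J y⟫ = ⟪x, y⟫)
    (e : OrthonormalBasis (Fin (2*n)) ℝ V)
    (S : V →ₗ[ℝ] V →ₗ[ℝ] V →ₗ[ℝ] ℝ) (hS : memK J S) :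
    (∀ T : V →ₗ[ℝ] V →ₗ[ℝ] V →ₗ[ℝ] ℝ, memK J T →
        (∀ Z : V, ∑ i, T (e i) (e i) Z = 0) →
        ∑ i, ∑ j, ∑ k, S (e i) (e j) (e k) * T (e i) (e j) (e k) = 0)
    ↔ ∃ σ : V →ₗ[ℝ] ℝ, ∀ B C D : V,
        S B C D = ⟪B, C⟫ * σ D - ⟪B, D⟫ * σ C + ⟪B, J C⟫ * σ (J D) - ⟪B, J D⟫ * σ (J C) := by
  have hJskew := inner_apply_left_eq_neg hJ2 hJiso
  have hc₁₂ : ∀ T, c₁₂ e T = 0 ↔ ∀ Z, ∑ i, T (e i) (e i) Z = 0 := fun T => by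
    simp [LinearMap.ext_iff]
  constructor
  · intro hSorth
    set σ : V →ₗ[ℝ] ℝ := ((Fintype.card (Fin (2 * n)) : ℝ))⁻¹ • c₁₂ e S
    -- `S - tensorOfForm J σ` would not elaborate: instance search finds no `AddCommGroup` on
    -- `V →ₗ[ℝ] V →ₗ[ℝ] V →ₗ[ℝ] ℝ`.
    set T := S + (-1 : ℝ) • tensorOfForm J σ
    have hT : memK J T := hS.add ((memK_tensorOfForm hJ2 σ).smul _)
    have hT₀ : c₁₂ e T = 0 := c₁₂_add_neg_tensorOfForm e hJ2 hJskew S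
    have hTT : tensorInner e T T = 0 := by
      rw [tensorInner_add_left, tensorInner_smul_left,
        tensorInner_tensorOfForm_eq_zero e hJ2 hJskew σ hT hT₀, mul_zero, add_zero]
      exact hSorth T hT ((hc₁₂ T).mp hT₀)
    refine ⟨σ, fun B C D => ?_⟩
    have hBCD := congr($(eq_zero_of_tensorInner_self_eq_zero e hTT) B C D)
    simp only [T, LinearMap.add_apply, LinearMap.smul_apply, tensorOfForm_apply,
      LinearMap.zero_apply, smul_eq_mul] at hBCD
    linarith
  · rintro ⟨σ, hσ⟩ T hT hT₀
    have hSσ : S = tensorOfForm J σ := by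
      ext B C D
      rw [hσ, tensorOfForm_apply]
    exact hSσ ▸ tensorInner_tensorOfForm_eq_zero e hJ2 hJskew σ hT ((hc₁₂ T).mpr hT₀)
end
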